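/- arXiv:1602.02826 — 2 statements merged into one kernel-verified Lean document; each statement's English description precedes it below -/
import Mathlib

section
/- Let p : E → Set be a pre-cohesive topos equipped with a connector 0,1 : 1 → I. An object X of E is weakly Kan if and only if the coequalizer fork p_*(X^I) ⇉ p_* X → p_! X (the two maps being p_* applied to evaluation at 0 and at 1, followed by θ) is powerful, i.e., remains a coequalizer after applying (−)^A for every set A. -/
open CategoryTheory Limits MonoidalCategory CartesianClosed

universe v u₁ u₂ u₃

variable (S : Type u₁) (E : Type u₂) [Category.{v} S] [Category.{v} E]

/-- A pre-cohesive string of adjoint functors `p_! ⊣ p^* ⊣ p_* ⊣ p^!` with `p^*`, `p^!`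
fully faithful, `p_!` preserving finite products, and the Nullstellensatz
(the canonical `θ : p_* ⟶ p_!` is epi; since the unit of `p^* ⊣ p_*` is invertible this is
equivalent to `p_*σ` being epi, where `σ` is the unit of `p_! ⊣ p^*`). -/
structure PreCohesive where
  pShrek : E ⥤ S
  pStar : S ⥤ E
  pLow : E ⥤ S
  pUpper : S ⥤ E
  adj₁ : pShrek ⊣ pStar
  adj₂ : pStar ⊣ pLow
  adj₃ : pLow ⊣ pUpper
  starFull : pStar.Full
  starFaithful : pStar.Faithful
  upperFull : pUpper.Full
  upperFaithful : pUpper.Faithful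
  piecesPreservesFiniteProducts : PreservesFiniteProducts pShrek
  nullstellensatz : ∀ X : E, Epi (pLow.map (adj₁.unit.app X))

variable {S E}

/-- The canonical natural map `θ_X : p_* X ⟶ p_! X`. -/
noncomputable def PreCohesive.theta (P : PreCohesive S E) (X : E) :
    P.pLow.obj X ⟶ P.pShrek.obj X :=
  letI := P.starFull
  letI := P.starFaithful
  P.pLow.map (P.adj₁.unit.app X) ≫ inv (P.adj₂.unit.app (P.pShrek.obj X))

/-- The inverse `τ⁻¹ : A ⟶ p_!(p^* A)` of the counit of `p_! ⊣ p^*`. -/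
noncomputable def PreCohesive.tauInv (P : PreCohesive S E) (A : S) :
    A ⟶ P.pShrek.obj (P.pStar.obj A) :=
  letI := P.starFull
  letI := P.starFaithful
  inv (P.adj₁.counit.app A)

section CCC

variable [CartesianMonoidalCategory S] [CartesianMonoidalCategory E]
  [MonoidalClosed S] [MonoidalClosed E]

/-- The canonical comparison `κ^{p_!}_{A,B} : p_!(B^A) ⟶ (p_! B)^{(p_! A)}`. -/
noncomputable def PreCohesive.kappa (P : PreCohesive S E) (A B : E) :
    P.pShrek.obj (A ⟹ B) ⟶ (P.pShrek.obj A ⟹ P.pShrek.obj B) :=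
  letI := P.piecesPreservesFiniteProducts
  (expComparison P.pShrek A).natTrans.app B

/-- The canonical comparison `κ^{p^*}_{A,B} : p^*(B^A) ⟶ (p^* A ⟹ p^* B)` (`p^*` preserves
limits, being a right adjoint). -/
noncomputable def PreCohesive.kappaStar (P : PreCohesive S E) (A B : S) :
    P.pStar.obj (A ⟹ B) ⟶ (P.pStar.obj A ⟹ P.pStar.obj B) :=
  letI := P.adj₁.rightAdjoint_preservesLimits
  (expComparison P.pStar A).natTrans.app B

/-- An object `X` is weakly Kan if `κ^{p_!}_{p^* A, X}` is invertible for every `A : S`. -/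
def PreCohesive.WeaklyKan (P : PreCohesive S E) (X : E) : Prop :=
  ∀ A : S, IsIso (P.kappa (P.pStar.obj A) X)

/-- Evaluation of `I ⟹ X` at a point `i : 1 ⟶ I`. -/
noncomputable def evPt {I : E} (i : 𝟙_ E ⟶ I) (X : E) : (I ⟹ X) ⟶ X :=
  (λ_ (I ⟹ X)).inv ≫ (i ▷ (I ⟹ X)) ≫ (ihom.ev I).app X

/-- A coequalizer fork in a category. -/
def IsCoeqFork {C : Type u₃} [Category.{v} C] {A B Q : C} (e₀ e₁ : A ⟶ B) (q : B ⟶ Q) : Prop :=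
  (e₀ ≫ q = e₁ ≫ q) ∧ ∀ ⦃Z : C⦄ (h : B ⟶ Z), e₀ ≫ h = e₁ ≫ h → ∃! k : Q ⟶ Z, q ≫ k = h

/-- `0,1 : 1 ⟶ I` is a connector for the pre-cohesive `P` if for every `X` the fork
`p_*(X^I) ⇉ p_* X → p_! X` is a coequalizer. -/
def PreCohesive.Connector (P : PreCohesive S E) (I : E) (i₀ i₁ : 𝟙_ E ⟶ I) : Prop :=
  ∀ X : E, IsCoeqFork (P.pLow.map (evPt i₀ X)) (P.pLow.map (evPt i₁ X)) (P.theta X)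

end CCC

/-- `q : D → Q` is a coequalizer of `e₀ e₁ : Eq → D` in the category of sets. -/
def IsSetCoequalizer {Eq D Q : Type u₁} (e₀ e₁ : Eq → D) (q : D → Q) : Prop :=
  (∀ z, q (e₀ z) = q (e₁ z)) ∧
    ∀ {Z : Type u₁} (h : D → Z), (∀ z, h (e₀ z) = h (e₁ z)) → ∃! k : Q → Z, k ∘ q = h

namespace Stmt15Aux
open CartesianMonoidalCategory MonoidalClosed

theorem setCoeq_transfer {D₁ D₂ Q G₁ G₂ Q' : Type u₁}
    {e₀ e₁ : D₁ → D₂} {q : D₂ → Q} {E₀ E₁ : G₁ → G₂} {q' : G₂ → Q'}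
    {α : D₁ → G₁} {b : D₂ → G₂} {k : Q → Q'}
    (hbase : IsSetCoequalizer e₀ e₁ q) (hα : Function.Surjective α)
    (hb : Function.Bijective b)
    (sq₀ : ∀ u, E₀ (α u) = b (e₀ u)) (sq₁ : ∀ u, E₁ (α u) = b (e₁ u))
    (sqq : ∀ d, q' (b d) = k (q d)) :
    IsSetCoequalizer E₀ E₁ q' ↔ Function.Bijective k := by
  obtain ⟨binv, hbl, hbr⟩ := Function.bijective_iff_has_inverse.mp hb
  constructor
  · intro hg
    -- k factors base fork through q'
    obtain ⟨mq, hmq, hmqu⟩ := hbase.2 q hbase.1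
    have hco2 : ∀ z, q (binv (E₀ z)) = q (binv (E₁ z)) := by
      intro z
      obtain ⟨u, rfl⟩ := hα z
      calc q (binv (E₀ (α u))) = q (binv (b (e₀ u))) := by rw [sq₀]
        _ = q (e₀ u) := congrArg q (hbl (e₀ u))
        _ = q (e₁ u) := hbase.1 u
        _ = q (binv (b (e₁ u))) := (congrArg q (hbl (e₁ u))).symm
        _ = q (binv (E₁ (α u))) := by rw [sq₁]
    obtain ⟨m', hm', _⟩ := hg.2 (fun g => q (binv g)) hco2
    have h2 : ∀ x, m' (k x) = x := by
      have ha : (fun x => m' (k x)) = mq := by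
        apply hmqu
        funext d
        show m' (k (q d)) = q d
        rw [← sqq]
        calc m' (q' (b d)) = q (binv (b d)) := congr_fun hm' (b d)
          _ = q d := congrArg q (hbl d)
      have hb2 : (fun x : Q => x) = mq := hmqu _ (funext fun d => rfl)
      intro x
      calc m' (k x) = mq x := congr_fun ha x
        _ = x := (congr_fun hb2 x).symm
    have h1 : ∀ x, k (m' x) = x := by
      obtain ⟨mm, hmm, hmmu⟩ := hg.2 q' hg.1
      have ha : (fun x => k (m' x)) = mm := by
        apply hmmu
        funext g
        show k (m' (q' g)) = q' g
        calc k (m' (q' g)) = k (q (binv g)) := congrArg k (congr_fun hm' g)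
          _ = q' (b (binv g)) := (sqq _).symm
          _ = q' g := congrArg q' (hbr g)
      have hb2 : (fun x : Q' => x) = mm := hmmu _ (funext fun d => rfl)
      intro x
      calc k (m' x) = mm x := congr_fun ha x
        _ = x := (congr_fun hb2 x).symm
    exact Function.bijective_iff_has_inverse.mpr ⟨m', h2, h1⟩
  · intro hk
    obtain ⟨kinv, hkl, hkr⟩ := Function.bijective_iff_has_inverse.mp hk
    constructor
    · intro z
      obtain ⟨u, rfl⟩ := hα z
      rw [sq₀ u, sq₁ u, sqq, sqq, hbase.1 u]
    · intro Z h hcoeq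
      have hcomp : ∀ z, (h ∘ b) (e₀ z) = (h ∘ b) (e₁ z) := by
        intro z
        show h (b (e₀ z)) = h (b (e₁ z))
        rw [← sq₀, ← sq₁, hcoeq]
      obtain ⟨m, hm, hmu⟩ := hbase.2 (h ∘ b) hcomp
      refine ⟨m ∘ kinv, ?_, ?_⟩
      · funext g
        obtain ⟨d, rfl⟩ := hb.surjective g
        show m (kinv (q' (b d))) = h (b d)
        rw [sqq]
        calc m (kinv (k (q d))) = m (q d) := congrArg m (hkl (q d))
          _ = h (b d) := congr_fun hm d
      · intro y hy
        have hyk : (y ∘ k) = m := by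
          apply hmu
          funext d
          show y (k (q d)) = h (b d)
          rw [← sqq]
          exact congr_fun hy (b d)
        funext x
        show y x = m (kinv x)
        calc y x = y (k (kinv x)) := congrArg y (hkr x).symm
          _ = m (kinv x) := congr_fun hyk (kinv x)


theorem isCoeqFork_toSet {A B Q : Type u₁} {e₀ e₁ : A ⟶ B} {q : B ⟶ Q}
    (h : IsCoeqFork e₀ e₁ q) : IsSetCoequalizer e₀ e₁ q := by
  obtain ⟨h1, h2⟩ := h
  constructor
  · intro z; exact types_congr_hom h1 z
  · intro Z f hf
    obtain ⟨k, hk, hk'⟩ := h2 (TypeCat.ofHom f) (by ext z; exact hf z)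
    exact ⟨⇑k, funext fun x => types_congr_hom hk x, fun y hy => by
      have := hk' (TypeCat.ofHom y) (by ext x; exact congr_fun hy x); rw [← this]; rfl⟩



section Cat
variable {E' : Type u₂} [Category.{u₁} E'] [CartesianMonoidalCategory E'] [MonoidalClosed E']
variable (P : PreCohesive (Type u₁) E')

/-- The point of `U A` corresponding to `a : A`. -/
noncomputable def ppt {A : Type u₁} (a : A) : 𝟙_ E' ⟶ P.pStar.obj A :=
  P.adj₁.homEquiv _ _ (TypeCat.ofHom (fun _ => a))

/-- Canonical point of `U (𝟙)`. -/
noncomputable def tpt : 𝟙_ E' ⟶ P.pStar.obj (𝟙_ (Type u₁)) :=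
  P.adj₁.homEquiv _ _ (toUnit _)

lemma uUnit_hom_ext {Z : E'} (f g : Z ⟶ P.pStar.obj (𝟙_ (Type u₁))) : f = g := by
  apply (P.adj₁.homEquiv _ _).symm.injective
  exact toUnit_unique _ _

/-- Canonical element of `p_*(𝟙)`. -/
noncomputable def e0 : P.pLow.obj (𝟙_ E') :=
  (P.adj₂.homEquiv (𝟙_ (Type u₁)) (𝟙_ E')) (toUnit _) PUnit.unit

lemma lowMap_tpt_e0 : P.pLow.map (tpt P) (e0 P) = P.adj₂.unit.app (𝟙_ (Type u₁)) PUnit.unit := by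
  have h : e0 P = P.pLow.map (toUnit (P.pStar.obj (𝟙_ (Type u₁)))) (P.adj₂.unit.app _ PUnit.unit) := by
    simp [e0, Adjunction.homEquiv_unit]
  rw [h, ← FunctorToTypes.map_comp_apply,
    uUnit_hom_ext P (toUnit (P.pStar.obj (𝟙_ (Type u₁))) ≫ tpt P) (𝟙 _),
    FunctorToTypes.map_id_apply]

lemma key1 {A : Type u₁} (a : A) :
    P.pLow.map (ppt P a) (e0 P) = P.adj₂.unit.app A a := by
  have hfact : ppt P a = tpt P ≫ P.pStar.map (TypeCat.ofHom (fun _ => a)) := by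
    rw [tpt, ← Adjunction.homEquiv_naturality_right]
    rfl
  rw [hfact, FunctorToTypes.map_comp_apply, lowMap_tpt_e0]
  exact (types_congr_hom (P.adj₂.unit.naturality (TypeCat.ofHom (fun _ => a) : 𝟙_ (Type u₁) ⟶ A)) PUnit.unit).symm

lemma key2 {A : Type u₁} (a : A) (z : P.pShrek.obj (𝟙_ E')) :
    P.pShrek.map (ppt P a) z = P.tauInv A a := by
  letI := P.starFull; letI := P.starFaithful
  have hinj : Function.Injective (P.adj₁.counit.app A) :=
    ((isIso_iff_bijective _).mp inferInstance).injective
  apply hinj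
  have h1 : P.adj₁.counit.app A (P.tauInv A a) = a := by
    unfold PreCohesive.tauInv
    exact types_congr_hom (IsIso.inv_hom_id (P.adj₁.counit.app A)) a
  rw [h1]
  have hdef : ppt P a = P.adj₁.unit.app (𝟙_ E') ≫ P.pStar.map (TypeCat.ofHom (fun _ => a)) := by
    unfold ppt
    exact P.adj₁.homEquiv_unit _ _ _
  rw [hdef, FunctorToTypes.map_comp_apply]
  exact types_congr_hom (P.adj₁.counit.naturality (TypeCat.ofHom (fun _ => a) : P.pShrek.obj (𝟙_ E') ⟶ A))
    (P.pShrek.map (P.adj₁.unit.app _) z)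

lemma theta_natural {Z Z' : E'} (f : Z ⟶ Z') :
    P.theta Z ≫ P.pShrek.map f = P.pLow.map f ≫ P.theta Z' := by
  letI := P.starFull; letI := P.starFaithful
  unfold PreCohesive.theta
  have h1 : P.adj₂.unit.app (P.pShrek.obj Z) ≫ P.pLow.map (P.pStar.map (P.pShrek.map f))
      = P.pShrek.map f ≫ P.adj₂.unit.app (P.pShrek.obj Z') :=
    (P.adj₂.unit.naturality (P.pShrek.map f)).symm
  have h2 : inv (P.adj₂.unit.app (P.pShrek.obj Z)) ≫ P.pShrek.map f =
      P.pLow.map (P.pStar.map (P.pShrek.map f)) ≫ inv (P.adj₂.unit.app (P.pShrek.obj Z')) := by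
    rw [IsIso.inv_comp_eq, ← Category.assoc, h1, Category.assoc, IsIso.hom_inv_id,
      Category.comp_id]
  rw [Category.assoc, h2, ← Category.assoc, ← Functor.map_comp]
  have h3 : P.adj₁.unit.app Z ≫ P.pStar.map (P.pShrek.map f) = f ≫ P.adj₁.unit.app Z' :=
    (P.adj₁.unit.naturality f).symm
  rw [h3, Functor.map_comp, Category.assoc]


lemma comp_evPt {M Y Z : E'} (h : Y ⟶ (M ⟹ Z)) (p : 𝟙_ E' ⟶ M) :
    h ≫ evPt p Z = (λ_ Y).inv ≫ p ▷ Y ≫ MonoidalClosed.uncurry h := by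
  show h ≫ (λ_ (M ⟹ Z)).inv ≫ (p ▷ (M ⟹ Z)) ≫ (ihom.ev M).app Z = _
  rw [← Category.assoc, leftUnitor_inv_naturality, Category.assoc,
    ← Category.assoc (𝟙_ E' ◁ h), whisker_exchange, Category.assoc, uncurry_eq]

lemma point_comp_evPt {M Z : E'} (n : 𝟙_ E' ⟶ (M ⟹ Z)) (p : 𝟙_ E' ⟶ M) :
    n ≫ evPt p Z = p ≫ (ρ_ M).inv ≫ MonoidalClosed.uncurry n := by
  rw [comp_evPt]
  have h : (λ_ (𝟙_ E')).inv ≫ (p ▷ (𝟙_ E')) = p ≫ (ρ_ M).inv := by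
    rw [unitors_inv_equal, ← rightUnitor_inv_naturality]
  rw [← Category.assoc, h, Category.assoc]

lemma evPt_naturality {M Z Z' : E'} (p : 𝟙_ E' ⟶ M) (f : Z ⟶ Z') :
    evPt p Z ≫ f = (ihom M).map f ≫ evPt p Z' := by
  rw [comp_evPt]
  have h : MonoidalClosed.uncurry ((ihom M).map f) = (ihom.ev M).app Z ≫ f := by
    rw [← Category.id_comp ((ihom M).map f), uncurry_natural_right, uncurry_id_eq_ev]
  rw [h]
  show ((λ_ (M ⟹ Z)).inv ≫ (p ▷ (M ⟹ Z)) ≫ (ihom.ev M).app Z) ≫ f = _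
  simp only [Category.assoc]


lemma elem_repr {M : E'} (u : P.pLow.obj M) :
    ∃ q : 𝟙_ E' ⟶ M, P.pLow.map q (e0 P) = u := by
  refine ⟨tpt P ≫ (P.adj₂.homEquiv _ M).symm (TypeCat.ofHom (fun _ => u)), ?_⟩
  rw [FunctorToTypes.map_comp_apply, lowMap_tpt_e0]
  have h := (P.adj₂.homEquiv _ M).apply_symm_apply (TypeCat.ofHom (fun _ => u) : 𝟙_ (Type u₁) ⟶ P.pLow.obj M)
  rw [Adjunction.homEquiv_unit] at h
  exact types_congr_hom h PUnit.unit

/-- The comparison `p_*(U A ⟹ Z) → (A → p_* Z)`. -/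
noncomputable def bmap (A : Type u₁) (Z : E') :
    P.pLow.obj (P.pStar.obj A ⟹ Z) → (A → P.pLow.obj Z) :=
  fun u a => P.pLow.map (evPt (ppt P a) Z) u

lemma bmap_elem (A : Type u₁) (Z : E') (q : 𝟙_ E' ⟶ (P.pStar.obj A ⟹ Z)) (a : A) :
    bmap P A Z (P.pLow.map q (e0 P)) a
      = P.pLow.map ((ρ_ (P.pStar.obj A)).inv ≫ MonoidalClosed.uncurry q)
          (P.adj₂.unit.app A a) := by
  show P.pLow.map (evPt (ppt P a) Z) (P.pLow.map q (e0 P)) = _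
  rw [← FunctorToTypes.map_comp_apply, point_comp_evPt, FunctorToTypes.map_comp_apply, key1]

lemma bmap_bijective (A : Type u₁) (Z : E') : Function.Bijective (bmap P A Z) := by
  constructor
  · intro u₁ u₂ h
    obtain ⟨q₁, rfl⟩ := elem_repr P u₁
    obtain ⟨q₂, rfl⟩ := elem_repr P u₂
    have hg : ∀ a : A, P.pLow.map ((ρ_ (P.pStar.obj A)).inv ≫ MonoidalClosed.uncurry q₁)
        (P.adj₂.unit.app A a)
        = P.pLow.map ((ρ_ (P.pStar.obj A)).inv ≫ MonoidalClosed.uncurry q₂)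
          (P.adj₂.unit.app A a) := by
      intro a
      rw [← bmap_elem, ← bmap_elem, h]
    have heq : P.adj₂.homEquiv A Z ((ρ_ (P.pStar.obj A)).inv ≫ MonoidalClosed.uncurry q₁)
        = P.adj₂.homEquiv A Z ((ρ_ (P.pStar.obj A)).inv ≫ MonoidalClosed.uncurry q₂) := by
      rw [Adjunction.homEquiv_unit, Adjunction.homEquiv_unit]
      ext a
      exact hg a
    have hgg := (P.adj₂.homEquiv A Z).injective heq
    have hq : q₁ = q₂ := uncurry_injective ((cancel_epi ((ρ_ (P.pStar.obj A)).inv)).mp hgg)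
    rw [hq]
  · intro f
    refine ⟨P.pLow.map (MonoidalClosed.curry ((ρ_ (P.pStar.obj A)).hom ≫
      (P.adj₂.homEquiv A Z).symm (TypeCat.ofHom f))) (e0 P), ?_⟩
    funext a
    rw [bmap_elem, uncurry_curry, Iso.inv_hom_id_assoc]
    have h := (P.adj₂.homEquiv A Z).apply_symm_apply (TypeCat.ofHom f : A ⟶ P.pLow.obj Z)
    rw [Adjunction.homEquiv_unit] at h
    exact types_congr_hom h a


lemma alpha_surjective (A : Type u₁) (I X : E') :
    Function.Surjective (fun (u : P.pLow.obj (I ⟹ (P.pStar.obj A ⟹ X))) (a : A) =>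
      P.pLow.map ((ihom I).map (evPt (ppt P a) X)) u) := by
  intro f
  set f' : P.pStar.obj A ⟶ (I ⟹ X) := (P.adj₂.homEquiv A (I ⟹ X)).symm (TypeCat.ofHom f) with hf'
  set m : I ⊗ P.pStar.obj A ⟶ X := MonoidalClosed.uncurry f' with hm
  set sw : P.pStar.obj A ⊗ (I ⊗ 𝟙_ E') ⟶ I ⊗ P.pStar.obj A :=
    lift (snd _ _ ≫ fst _ _) (fst _ _) with hsw
  set n : 𝟙_ E' ⟶ (I ⟹ (P.pStar.obj A ⟹ X)) :=
    MonoidalClosed.curry (MonoidalClosed.curry (sw ≫ m)) with hn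
  refine ⟨P.pLow.map n (e0 P), ?_⟩
  funext a
  show P.pLow.map ((ihom I).map (evPt (ppt P a) X)) (P.pLow.map n (e0 P)) = f a
  rw [← FunctorToTypes.map_comp_apply]
  have hcomp : n ≫ (ihom I).map (evPt (ppt P a) X) = ppt P a ≫ f' := by
    rw [hn, ← curry_natural_right]
    have h1 : MonoidalClosed.curry (sw ≫ m) ≫ evPt (ppt P a) X
        = (λ_ (I ⊗ 𝟙_ E')).inv ≫ (ppt P a ▷ (I ⊗ 𝟙_ E')) ≫ (sw ≫ m) := by
      rw [comp_evPt, uncurry_curry]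
    rw [h1]
    have h2 : (λ_ (I ⊗ 𝟙_ E')).inv ≫ (ppt P a ▷ (I ⊗ 𝟙_ E')) ≫ sw = I ◁ ppt P a := by
      apply CartesianMonoidalCategory.hom_ext
      · rw [Category.assoc, Category.assoc, hsw, lift_fst, whiskerLeft_fst,
          ← Category.assoc (ppt P a ▷ (I ⊗ 𝟙_ E')), whiskerRight_snd,
          leftUnitor_inv_snd_assoc]
      · rw [Category.assoc, Category.assoc, hsw, lift_snd, whiskerLeft_snd,
          whiskerRight_fst, leftUnitor_inv_fst_assoc]
        exact congrArg (· ≫ ppt P a) (toUnit_unique _ _)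
    rw [← Category.assoc, ← Category.assoc, Category.assoc (λ_ (I ⊗ 𝟙_ E')).inv, h2,
      curry_natural_left]
    have h3 : MonoidalClosed.curry m = f' := curry_uncurry f'
    rw [h3]
  rw [hcomp, FunctorToTypes.map_comp_apply, key1, hf']
  have h := (P.adj₂.homEquiv A (I ⟹ X)).apply_symm_apply (TypeCat.ofHom f : A ⟶ P.pLow.obj (I ⟹ X))
  rw [Adjunction.homEquiv_unit] at h
  exact types_congr_hom h a


lemma uncurry_apply_types {A B C : Type u₁} (f : B ⟶ (A ⟹ C)) (x : A ⊗ B) :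
    MonoidalClosed.uncurry f x = (ConcreteCategory.hom (C := Type u₁) (X := A) (Y := C) (f x.2)) x.1 := by
  rw [uncurry_eq]; rfl

lemma k_eq_kappa {A : Type u₁} (a : A) (X : E') (u : P.pShrek.obj (P.pStar.obj A ⟹ X)) :
    P.pShrek.map (evPt (ppt P a) X) u = (ConcreteCategory.hom (C := Type u₁) (X := P.pShrek.obj (P.pStar.obj A)) (Y := P.pShrek.obj X)
      (P.kappa (P.pStar.obj A) X u)) (P.tauInv A a) := by
  letI := P.piecesPreservesFiniteProducts
  letI := P.starFull; letI := P.starFaithful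
  have happ : (ConcreteCategory.hom (C := Type u₁) (X := P.pShrek.obj (P.pStar.obj A)) (Y := P.pShrek.obj X)
      (P.kappa (P.pStar.obj A) X u)) (P.tauInv A a)
      = MonoidalClosed.uncurry ((expComparison P.pShrek (P.pStar.obj A)).natTrans.app X)
          ((P.tauInv A a, u) :
            P.pShrek.obj (P.pStar.obj A) ⊗ P.pShrek.obj (P.pStar.obj A ⟹ X)) := by
    rw [uncurry_apply_types]
    rfl
  rw [happ, uncurry_expComparison, types_comp_apply]
  have h1 : CartesianMonoidalCategory.prodComparison P.pShrek (P.pStar.obj A) (P.pStar.obj A ⟹ X)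
      (P.pShrek.map ((λ_ (P.pStar.obj A ⟹ X)).inv ≫
        (ppt P a ▷ (P.pStar.obj A ⟹ X))) u)
      = ((P.tauInv A a, u) :
          P.pShrek.obj (P.pStar.obj A) ⊗ P.pShrek.obj (P.pStar.obj A ⟹ X)) := by
    apply Prod.ext
    · have hfst := types_congr_hom
        (CartesianMonoidalCategory.prodComparison_fst (F := P.pShrek) (A := P.pStar.obj A)
          (B := P.pStar.obj A ⟹ X))
        (P.pShrek.map ((λ_ (P.pStar.obj A ⟹ X)).inv ≫ (ppt P a ▷ (P.pStar.obj A ⟹ X))) u)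
      refine hfst.trans ?_
      rw [← FunctorToTypes.map_comp_apply, Category.assoc, whiskerRight_fst,
        leftUnitor_inv_fst_assoc, FunctorToTypes.map_comp_apply]
      exact key2 P a _
    · have hsnd := types_congr_hom
        (CartesianMonoidalCategory.prodComparison_snd (F := P.pShrek) (A := P.pStar.obj A)
          (B := P.pStar.obj A ⟹ X))
        (P.pShrek.map ((λ_ (P.pStar.obj A ⟹ X)).inv ≫ (ppt P a ▷ (P.pStar.obj A ⟹ X))) u)
      refine hsnd.trans ?_
      rw [← FunctorToTypes.map_comp_apply, Category.assoc, whiskerRight_snd,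
        leftUnitor_inv_snd, FunctorToTypes.map_id_apply]
  rw [← h1]
  have h2 := types_congr_hom (IsIso.hom_inv_id
    (CartesianMonoidalCategory.prodComparison P.pShrek (P.pStar.obj A) (P.pStar.obj A ⟹ X)))
    (P.pShrek.map ((λ_ (P.pStar.obj A ⟹ X)).inv ≫ (ppt P a ▷ (P.pStar.obj A ⟹ X))) u)
  rw [show (inv (CartesianMonoidalCategory.prodComparison P.pShrek (P.pStar.obj A)
      (P.pStar.obj A ⟹ X)))
      (CartesianMonoidalCategory.prodComparison P.pShrek (P.pStar.obj A) (P.pStar.obj A ⟹ X)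
        (P.pShrek.map ((λ_ (P.pStar.obj A ⟹ X)).inv ≫
          (ppt P a ▷ (P.pStar.obj A ⟹ X))) u))
      = P.pShrek.map ((λ_ (P.pStar.obj A ⟹ X)).inv ≫
          (ppt P a ▷ (P.pStar.obj A ⟹ X))) u from h2]
  rw [← FunctorToTypes.map_comp_apply, Category.assoc]
  rfl


lemma master (P : PreCohesive (Type u₁) E') (I : E') (i₀ i₁ : 𝟙_ E' ⟶ I)
    (hconn : P.Connector I i₀ i₁) (X : E') (A : Type u₁) :
    IsSetCoequalizer
      (fun h : A → P.pLow.obj (I ⟹ X) => fun a => P.pLow.map (evPt i₀ X) (h a))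
      (fun h : A → P.pLow.obj (I ⟹ X) => fun a => P.pLow.map (evPt i₁ X) (h a))
      (fun h : A → P.pLow.obj X => fun a => P.theta X (h a))
      ↔ IsIso (P.kappa (P.pStar.obj A) X) := by
  have hbase := isCoeqFork_toSet (hconn (P.pStar.obj A ⟹ X))
  have sq₀ : ∀ u, (fun h : A → P.pLow.obj (I ⟹ X) => fun a => P.pLow.map (evPt i₀ X) (h a))
      ((fun u a => P.pLow.map ((ihom I).map (evPt (ppt P a) X)) u) u)
      = bmap P A X (P.pLow.map (evPt i₀ (P.pStar.obj A ⟹ X)) u) := by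
    intro u
    funext a
    show P.pLow.map (evPt i₀ X) (P.pLow.map ((ihom I).map (evPt (ppt P a) X)) u)
      = P.pLow.map (evPt (ppt P a) X) (P.pLow.map (evPt i₀ (P.pStar.obj A ⟹ X)) u)
    rw [← FunctorToTypes.map_comp_apply, ← FunctorToTypes.map_comp_apply, ← evPt_naturality]
  have sq₁ : ∀ u, (fun h : A → P.pLow.obj (I ⟹ X) => fun a => P.pLow.map (evPt i₁ X) (h a))
      ((fun u a => P.pLow.map ((ihom I).map (evPt (ppt P a) X)) u) u)
      = bmap P A X (P.pLow.map (evPt i₁ (P.pStar.obj A ⟹ X)) u) := by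
    intro u
    funext a
    show P.pLow.map (evPt i₁ X) (P.pLow.map ((ihom I).map (evPt (ppt P a) X)) u)
      = P.pLow.map (evPt (ppt P a) X) (P.pLow.map (evPt i₁ (P.pStar.obj A ⟹ X)) u)
    rw [← FunctorToTypes.map_comp_apply, ← FunctorToTypes.map_comp_apply, ← evPt_naturality]
  have sqq : ∀ d, (fun h : A → P.pLow.obj X => fun a => P.theta X (h a)) (bmap P A X d)
      = (fun u a => P.pShrek.map (evPt (ppt P a) X) u) (P.theta (P.pStar.obj A ⟹ X) d) := by
    intro d
    funext a
    exact (types_congr_hom (theta_natural P (evPt (ppt P a) X)) d).symm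
  have htr := setCoeq_transfer
    (E₀ := fun h : A → P.pLow.obj (I ⟹ X) => fun a => P.pLow.map (evPt i₀ X) (h a))
    (E₁ := fun h : A → P.pLow.obj (I ⟹ X) => fun a => P.pLow.map (evPt i₁ X) (h a))
    (q' := fun h : A → P.pLow.obj X => fun a => P.theta X (h a))
    (α := fun u a => P.pLow.map ((ihom I).map (evPt (ppt P a) X)) u)
    (b := bmap P A X) (k := fun u a => P.pShrek.map (evPt (ppt P a) X) u)
    hbase (alpha_surjective P A I X) (bmap_bijective P A X) sq₀ sq₁ sqq
  rw [htr]
  have htau : Function.Bijective (P.tauInv A) := by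
    letI := P.starFull; letI := P.starFaithful
    rw [← isIso_iff_bijective]
    unfold PreCohesive.tauInv
    infer_instance
  have hc : Function.Bijective
      (fun (g : P.pShrek.obj (P.pStar.obj A) ⟹ P.pShrek.obj X) (a : A) =>
        (ConcreteCategory.hom (C := Type u₁) (X := P.pShrek.obj (P.pStar.obj A)) (Y := P.pShrek.obj X) g)
          (P.tauInv A a)) :=
    (Equiv.arrowCongr (Equiv.ofBijective _ htau) (Equiv.refl (P.pShrek.obj X))).symm.bijective.comp
      TypeCat.homEquiv.bijective
  have hktok : (fun u a => P.pShrek.map (evPt (ppt P a) X) u) =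
      (fun (g : P.pShrek.obj (P.pStar.obj A) ⟹ P.pShrek.obj X) (a : A) =>
        (ConcreteCategory.hom (C := Type u₁) (X := P.pShrek.obj (P.pStar.obj A)) (Y := P.pShrek.obj X) g)
          (P.tauInv A a)) ∘ (P.kappa (P.pStar.obj A) X) := by
    funext u a
    exact k_eq_kappa P a X u
  rw [hktok]
  exact (Function.Bijective.of_comp_iff' hc _).trans (isIso_iff_bijective _).symm

end Cat
end Stmt15Aux


/-- let `p : E → Set` be pre-cohesive with a connector `0,1 : 1 ⟶ I`. An
object `X` is weakly Kan iff the coequalizer fork `p_*(X^I) ⇉ p_* X → p_! X` is powerful,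
i.e. remains a coequalizer of sets after applying `(−)^A` for every set `A`. -/
theorem stmt15 {E' : Type u₂} [Category.{u₁} E'] [CartesianMonoidalCategory E'] [MonoidalClosed E']
    (P : PreCohesive (Type u₁) E') (I : E') (i₀ i₁ : 𝟙_ E' ⟶ I)
    (hconn : P.Connector I i₀ i₁) (X : E') :
    P.WeaklyKan X ↔
      ∀ A : Type u₁,
        IsSetCoequalizer
          (fun h : A → P.pLow.obj (I ⟹ X) => fun a => P.pLow.map (evPt i₀ X) (h a))
          (fun h : A → P.pLow.obj (I ⟹ X) => fun a => P.pLow.map (evPt i₁ X) (h a))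
          (fun h : A → P.pLow.obj X => fun a => P.theta X (h a)) := by
  constructor
  · intro hwk A
    exact (Stmt15Aux.master P I i₀ i₁ hconn X A).mpr (hwk A)
  · intro hp A
    exact (Stmt15Aux.master P I i₀ i₁ hconn X A).mp (hp A)
end

section
/- Let p : E → Set be pre-cohesive with a connector, and suppose Set satisfies the (internal) axiom of choice (so epimorphisms of sets are split and (−)^A preserves epis and quasi-exact forks). If X in E is navigable—i.e., the connector fork p_*(X^I) ⇉ p_* X → p_! X is quasi-exact (a coequalizer such that the induced map from p_*(X^I) to the kernel pair of θ_X is a regular epimorphism)—then X is weakly Kan. In particular, in Set, any quasi-exact coequalizer fork is powerful. -/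
open CategoryTheory Limits MonoidalCategory CartesianClosed

universe v u₁ u₂ u₃

variable (S : Type u₁) (E : Type u₂) [Category.{v} S] [Category.{v} E]

variable {S E}

/-- A fork of sets is quasi-exact if it is a coequalizer and the induced map to the kernel
pair of `q` is a (regular) epimorphism, i.e. surjective. -/
def QuasiExactSet {A B C : Type u₁} (e₀ e₁ : A → B) (q : B → C) : Prop :=
  IsSetCoequalizer e₀ e₁ q ∧ ∀ b b' : B, q b = q b' → ∃ a : A, e₀ a = b ∧ e₁ a = b'

namespace Stmt16Aux

open CartesianMonoidalCategory

section SetLemmas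

lemma setCoeq_surjective {A B C : Type u₁} {e₀ e₁ : A → B} {q : B → C}
    (h : IsSetCoequalizer e₀ e₁ q) : Function.Surjective q := by
  obtain ⟨k, hk, huniq⟩ := h.2 (fun _ : B => (ULift.up True : ULift.{u₁} Prop)) (fun _ => rfl)
  have h1 : (fun c => (ULift.up (∃ b, q b = c) : ULift.{u₁} Prop)) = k :=
    huniq _ (funext fun b => congrArg ULift.up (eq_true ⟨b, rfl⟩))
  have h2 : (fun _ : C => (ULift.up True : ULift.{u₁} Prop)) = k := huniq _ rfl
  intro c
  exact of_eq_true (congrArg ULift.down (congrFun (h1.trans h2.symm) c))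

lemma quasiExact_powerful {A B C : Type u₁} {e₀ e₁ : A → B} {q : B → C}
    (h : QuasiExactSet e₀ e₁ q) (Z : Type u₁) :
    IsSetCoequalizer (fun h : Z → A => fun z => e₀ (h z))
      (fun h : Z → A => fun z => e₁ (h z)) (fun h : Z → B => fun z => q (h z)) := by
  have hsurj : Function.Surjective q := setCoeq_surjective h.1
  obtain ⟨⟨hcomm, -⟩, hker⟩ := h
  constructor
  · intro g; funext z; exact hcomm (g z)
  · intro W H hH
    have key : ∀ f g : Z → B, (∀ z, q (f z) = q (g z)) → H f = H g := by
      intro f g hfg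
      choose a ha0 ha1 using fun z => hker (f z) (g z) (hfg z)
      calc H f = H (fun z => e₀ (a z)) := (congrArg H (funext ha0)).symm
        _ = H (fun z => e₁ (a z)) := hH a
        _ = H g := congrArg H (funext ha1)
    choose lift hlift using hsurj
    refine ⟨fun g => H (fun z => lift (g z)), funext fun f => ?_, ?_⟩
    · exact key _ f (fun z => hlift (q (f z)))
    · intro k hk
      funext g
      have h1 : k (fun z => q (lift (g z))) = H (fun z => lift (g z)) := congrFun hk _
      have h2 : (fun z => q (lift (g z))) = g := funext fun z => hlift (g z)
      conv_lhs => rw [← h2]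
      exact h1

lemma coeq_cmp_bijective {A B Q A' B' Q' : Type u₁}
    {e₀ e₁ : A → B} {q : B → Q} {e₀' e₁' : A' → B'} {q' : B' → Q'}
    (h : IsSetCoequalizer e₀ e₁ q) (h' : IsSetCoequalizer e₀' e₁' q')
    (α : A → A') (hα : Function.Surjective α) (β : B ≃ B')
    (s₀ : ∀ x, β (e₀ x) = e₀' (α x)) (s₁ : ∀ x, β (e₁ x) = e₁' (α x))
    (γ : Q → Q') (hγ : ∀ b, γ (q b) = q' (β b)) : Function.Bijective γ := by
  have hcoeq : ∀ z : A', q (β.symm (e₀' z)) = q (β.symm (e₁' z)) := by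
    intro x'
    obtain ⟨x, rfl⟩ := hα x'
    rw [← s₀ x, ← s₁ x, β.symm_apply_apply, β.symm_apply_apply]
    exact h.1 x
  obtain ⟨δ, hδ, -⟩ := h'.2 (fun b' => q (β.symm b')) hcoeq
  have hδ' : ∀ b', δ (q' b') = q (β.symm b') := fun b' => congrFun hδ b'
  have hq := setCoeq_surjective h
  have hq' := setCoeq_surjective h'
  have hδγ : ∀ y, δ (γ y) = y := by
    intro y
    obtain ⟨b, rfl⟩ := hq y
    rw [hγ, hδ', β.symm_apply_apply]
  constructor
  · intro y y' hyy
    have := congrArg δ hyy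
    rwa [hδγ, hδγ] at this
  · intro y'
    obtain ⟨b', rfl⟩ := hq' y'
    exact ⟨q (β.symm b'), by rw [hγ, β.apply_symm_apply]⟩

lemma isCoeqFork_to_set {A B Q : Type u₁} {e₀ e₁ : A ⟶ B} {q : B ⟶ Q}
    (h : IsCoeqFork e₀ e₁ q) : IsSetCoequalizer e₀ e₁ q :=
  ⟨fun z => types_congr_hom h.1 z, fun {Z} f hf => by
    obtain ⟨k, hk, hu⟩ := h.2 (TypeCat.ofHom f) (by ext z; exact hf z)
    exact ⟨k, funext fun b => types_congr_hom hk b, fun k' hk' => funext fun x =>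
      types_congr_hom (hu (TypeCat.ofHom k') (by ext b; exact congrFun hk' b)) x⟩⟩

end SetLemmas

section CatLemmas

variable {E' : Type u₂} [Category.{u₁} E'] [CartesianMonoidalCategory E'] [MonoidalClosed E']

/-- The monoidal unit of a category with chosen finite products is terminal. -/
noncomputable def unitIsTerminal (C : Type u₃) [Category.{v} C] [CartesianMonoidalCategory C] :
    IsTerminal (𝟙_ C) :=
  IsTerminal.ofUniqueHom (fun X => toUnit X) (fun _ m => toUnit_unique m _)

/-- Naturality of evaluation at a point. -/
lemma evPt_natural {I X X' : E'} (i : 𝟙_ E' ⟶ I) (w : X ⟶ X') :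
    (ihom I).map w ≫ evPt i X' = evPt i X ≫ w := by
  have hev : (I ◁ (ihom I).map w) ≫ (ihom.ev I).app X' = (ihom.ev I).app X ≫ w := by
    simpa using (ihom.ev I).naturality w
  simp only [evPt]
  rw [MonoidalCategory.leftUnitor_inv_naturality_assoc, whisker_exchange_assoc,
    Category.assoc, hev]
  simp only [Category.assoc]

/-- Evaluating at a point after any map into an exponential. -/
lemma comp_evPt {C : Type u₃} [Category.{v} C] [CartesianMonoidalCategory C] [MonoidalClosed C]
    {B W X : C} (pt : 𝟙_ C ⟶ B) (f : W ⟶ B ⟹ X) :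
    f ≫ evPt pt X = (λ_ W).inv ≫ (pt ▷ W) ≫ MonoidalClosed.uncurry f := by
  rw [evPt, MonoidalCategory.leftUnitor_inv_naturality_assoc, whisker_exchange_assoc,
    ← MonoidalClosed.uncurry_eq]


variable (P : PreCohesive (Type u₁) E')

noncomputable def tStar : IsTerminal (P.pStar.obj (𝟙_ (Type u₁))) :=
  letI := P.adj₁.rightAdjoint_preservesLimits
  Limits.IsTerminal.isTerminalObj P.pStar _ (unitIsTerminal _)

noncomputable def tShrek : IsTerminal (P.pShrek.obj (𝟙_ E')) :=
  letI := P.piecesPreservesFiniteProducts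
  Limits.IsTerminal.isTerminalObj P.pShrek _ (unitIsTerminal _)

/-- The point of `p^* A` corresponding to `a : A`. -/
noncomputable def ptU {A : Type u₁} (a : A) : 𝟙_ E' ⟶ P.pStar.obj A :=
  (P.adj₁.homEquiv (𝟙_ E') A) (TypeCat.ofHom fun _ => a)

/-- The canonical map `p_*(p^* A ⟹ X) → (A → p_* X)`. -/
noncomputable def Phi (A : Type u₁) (X : E') :
    P.pLow.obj (P.pStar.obj A ⟹ X) → (A → P.pLow.obj X) :=
  fun s a => P.pLow.map (evPt (ptU P a) X) s

lemma toUnit_ptU {A : Type u₁} (a : A) :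
    toUnit (P.pStar.obj (𝟙_ (Type u₁))) ≫ ptU P a
      = P.pStar.map (TypeCat.ofHom fun _ => a) := by
  rw [ptU, ← Adjunction.homEquiv_naturality_left, Adjunction.homEquiv_unit]
  have h3 : (P.pShrek.map (toUnit (P.pStar.obj (𝟙_ (Type u₁)))) ≫ (TypeCat.ofHom fun _ => a) :
      P.pShrek.obj (P.pStar.obj (𝟙_ (Type u₁))) ⟶ A)
      = (TypeCat.ofHom fun _ => PUnit.unit : P.pShrek.obj (P.pStar.obj (𝟙_ (Type u₁))) ⟶ 𝟙_ (Type u₁))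
        ≫ (TypeCat.ofHom fun _ => a : 𝟙_ (Type u₁) ⟶ A) := rfl
  rw [h3, Functor.map_comp, ← Category.assoc]
  have h4 : P.adj₁.unit.app (P.pStar.obj (𝟙_ (Type u₁)))
      ≫ P.pStar.map (TypeCat.ofHom fun _ => PUnit.unit : P.pShrek.obj (P.pStar.obj (𝟙_ (Type u₁))) ⟶ 𝟙_ (Type u₁))
      = 𝟙 _ := (tStar P).hom_ext _ _
  rw [h4]
  simp

/-- The equivalence underlying `Phi`. -/
noncomputable def PhiEquiv (A : Type u₁) (X : E') :
    P.pLow.obj (P.pStar.obj A ⟹ X) ≃ (A → P.pLow.obj X) :=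
  letI e0 : P.pLow.obj (P.pStar.obj A ⟹ X) ≃ (𝟙_ (Type u₁) ⟶ P.pLow.obj (P.pStar.obj A ⟹ X)) :=
    ⟨fun s => TypeCat.ofHom fun _ => s, fun f => f PUnit.unit, fun _ => rfl, fun _ => rfl⟩
  letI e1 := (P.adj₂.homEquiv (𝟙_ (Type u₁)) (P.pStar.obj A ⟹ X)).symm
  letI e2 : (P.pStar.obj (𝟙_ (Type u₁)) ⟶ P.pStar.obj A ⟹ X)
      ≃ (P.pStar.obj A ⊗ P.pStar.obj (𝟙_ (Type u₁)) ⟶ X) :=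
    ⟨MonoidalClosed.uncurry, MonoidalClosed.curry, MonoidalClosed.curry_uncurry,
      MonoidalClosed.uncurry_curry⟩
  letI r : P.pStar.obj A ⟶ P.pStar.obj A ⊗ P.pStar.obj (𝟙_ (Type u₁)) :=
    lift (𝟙 _) ((tStar P).from _)
  letI e3 : (P.pStar.obj A ⊗ P.pStar.obj (𝟙_ (Type u₁)) ⟶ X) ≃ (P.pStar.obj A ⟶ X) :=
    ⟨fun f => r ≫ f, fun g => fst _ _ ≫ g,
      fun f => by
        show fst _ _ ≫ r ≫ f = f
        rw [← Category.assoc]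
        have : (fst _ _ ≫ r : P.pStar.obj A ⊗ P.pStar.obj (𝟙_ (Type u₁)) ⟶ _) = 𝟙 _ := by
          apply CartesianMonoidalCategory.hom_ext
          · simp [r]
          · exact (tStar P).hom_ext _ _
        rw [this, Category.id_comp],
      fun g => by
        show r ≫ fst _ _ ≫ g = g
        rw [← Category.assoc, lift_fst, Category.id_comp]⟩
  letI e4 := (P.adj₂.homEquiv A X).trans TypeCat.homEquiv
  e0.trans (e1.trans (e2.trans (e3.trans e4)))

lemma phiEquiv_eq (A : Type u₁) (X : E') : ⇑(PhiEquiv P A X) = Phi P A X := by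
  funext s a
  show (P.adj₂.homEquiv A X)
      (lift (𝟙 _) ((tStar P).from _)
        ≫ MonoidalClosed.uncurry
            ((P.adj₂.homEquiv (𝟙_ (Type u₁)) (P.pStar.obj A ⟹ X)).symm (TypeCat.ofHom fun _ => s))) a
    = P.pLow.map (evPt (ptU P a) X) s
  set sh := (P.adj₂.homEquiv (𝟙_ (Type u₁)) (P.pStar.obj A ⟹ X)).symm (TypeCat.ofHom fun _ => s) with hsh
  -- identify the key morphism identity in `E'`
  have key : P.pStar.map (TypeCat.ofHom fun _ => a : 𝟙_ (Type u₁) ⟶ A)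
        ≫ lift (𝟙 _) ((tStar P).from _) ≫ MonoidalClosed.uncurry sh
      = sh ≫ evPt (ptU P a) X := by
    rw [comp_evPt]
    rw [← Category.assoc, ← Category.assoc]
    congr 1
    apply CartesianMonoidalCategory.hom_ext
    · rw [Category.assoc, lift_fst, Category.comp_id, Category.assoc]
      have h1 : (ptU P a ▷ P.pStar.obj (𝟙_ (Type u₁))) ≫ fst _ _
          = fst _ _ ≫ ptU P a := by simp
      rw [h1, ← Category.assoc, leftUnitor_inv_fst, toUnit_ptU]
    · apply (tStar P).hom_ext
  -- transfer to `Type u₁` by adjunction naturality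
  have lhs : (P.adj₂.homEquiv A X)
        (lift (𝟙 _) ((tStar P).from _) ≫ MonoidalClosed.uncurry sh) a
      = (P.adj₂.homEquiv (𝟙_ (Type u₁)) X)
          (P.pStar.map (TypeCat.ofHom fun _ => a : 𝟙_ (Type u₁) ⟶ A)
            ≫ lift (𝟙 _) ((tStar P).from _) ≫ MonoidalClosed.uncurry sh) PUnit.unit := by
    rw [Adjunction.homEquiv_naturality_left]
    rfl
  have rhs : P.pLow.map (evPt (ptU P a) X) s
      = (P.adj₂.homEquiv (𝟙_ (Type u₁)) X) (sh ≫ evPt (ptU P a) X) PUnit.unit := by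
    rw [Adjunction.homEquiv_naturality_right, hsh, Equiv.apply_symm_apply]
    rfl
  rw [lhs, rhs, key]

lemma phi_bijective (A : Type u₁) (X : E') : Function.Bijective (Phi P A X) := by
  rw [← phiEquiv_eq]
  exact (PhiEquiv P A X).bijective

/-- The swap morphism and its exchange law. -/
noncomputable def swMap (I B X : E') : (B ⟹ (I ⟹ X)) ⟶ (I ⟹ (B ⟹ X)) :=
  MonoidalClosed.curry (MonoidalClosed.curry
    (lift (snd _ _ ≫ fst _ _)
      (lift (fst _ _) (snd _ _ ≫ snd _ _) ≫ (ihom.ev B).app (I ⟹ X)) ≫ (ihom.ev I).app X))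

lemma swMap_evPt (I B X : E') (pt : 𝟙_ E' ⟶ B) :
    swMap I B X ≫ (ihom I).map (evPt pt X) = evPt pt (I ⟹ X) := by
  have hL : (λ_ (I ⊗ (B ⟹ (I ⟹ X)))).inv ≫ (pt ▷ (I ⊗ (B ⟹ (I ⟹ X))))
        ≫ lift (fst _ _) (snd _ _ ≫ snd _ _)
      = lift (toUnit _ ≫ pt) (snd _ _) := by
    apply CartesianMonoidalCategory.hom_ext
    · simp
    · simp
  have hR2 : snd I (B ⟹ (I ⟹ X)) ≫ (λ_ (B ⟹ (I ⟹ X))).inv ≫ (pt ▷ (B ⟹ (I ⟹ X)))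
      = lift (toUnit _ ≫ pt) (snd _ _) := by
    apply CartesianMonoidalCategory.hom_ext
    · simp
    · simp
  have hpre : (λ_ (I ⊗ (B ⟹ (I ⟹ X)))).inv ≫ (pt ▷ (I ⊗ (B ⟹ (I ⟹ X))))
        ≫ lift (snd _ _ ≫ fst _ _)
          (lift (fst _ _) (snd _ _ ≫ snd _ _) ≫ (ihom.ev B).app (I ⟹ X))
      = I ◁ evPt pt (I ⟹ X) := by
    apply CartesianMonoidalCategory.hom_ext
    · simp
    · rw [whiskerLeft_snd, evPt]
      simp only [Category.assoc, lift_snd]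
      rw [reassoc_of% hL, reassoc_of% hR2]
  have hpre2 := congrArg (fun t => t ≫ (ihom.ev I).app X) hpre
  simp only [Category.assoc] at hpre2
  rw [swMap, ← MonoidalClosed.curry_natural_right, comp_evPt, MonoidalClosed.uncurry_curry,
    MonoidalClosed.curry_eq_iff, MonoidalClosed.uncurry_eq]
  simpa using hpre2

lemma theta_natural {X Y : E'} (f : X ⟶ Y) :
    P.pLow.map f ≫ P.theta Y = P.theta X ≫ P.pShrek.map f := by
  letI := P.starFull
  letI := P.starFaithful
  have hu : f ≫ P.adj₁.unit.app Y = P.adj₁.unit.app X ≫ P.pStar.map (P.pShrek.map f) := by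
    simpa using P.adj₁.unit.naturality f
  have hn : P.pShrek.map f ≫ P.adj₂.unit.app (P.pShrek.obj Y)
      = P.adj₂.unit.app (P.pShrek.obj X) ≫ P.pLow.map (P.pStar.map (P.pShrek.map f)) := by
    simpa using P.adj₂.unit.naturality (P.pShrek.map f)
  have hx : P.pLow.map (P.pStar.map (P.pShrek.map f)) ≫ inv (P.adj₂.unit.app (P.pShrek.obj Y))
      = inv (P.adj₂.unit.app (P.pShrek.obj X)) ≫ P.pShrek.map f := by
    rw [IsIso.comp_inv_eq, Category.assoc, hn, ← Category.assoc, IsIso.inv_hom_id,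
      Category.id_comp]
  simp only [PreCohesive.theta]
  rw [← Category.assoc, ← P.pLow.map_comp, hu, P.pLow.map_comp, Category.assoc, hx,
    ← Category.assoc]

lemma kappa_point (B X : E') (b : 𝟙_ E' ⟶ B) :
    P.pShrek.map (evPt b X)
      = P.kappa B X ≫ evPt ((tShrek P).from (𝟙_ (Type u₁)) ≫ P.pShrek.map b) (P.pShrek.obj X) := by
  letI := P.piecesPreservesFiniteProducts
  rw [PreCohesive.kappa, comp_evPt, uncurry_expComparison, evPt, Functor.map_comp,
    Functor.map_comp]
  have hpre : (P.pShrek.map (λ_ (B ⟹ X)).inv ≫ P.pShrek.map (b ▷ (B ⟹ X)))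
        ≫ prodComparison P.pShrek B (B ⟹ X)
      = (λ_ (P.pShrek.obj (B ⟹ X))).inv
        ≫ (((tShrek P).from (𝟙_ (Type u₁)) ≫ P.pShrek.map b) ▷ P.pShrek.obj (B ⟹ X)) := by
    apply CartesianMonoidalCategory.hom_ext
    · rw [Category.assoc, Category.assoc, CartesianMonoidalCategory.prodComparison_fst, ← Functor.map_comp,
        ← Functor.map_comp]
      have h1 : ((λ_ (B ⟹ X)).inv ≫ (b ▷ (B ⟹ X)) ≫ fst _ _ : (B ⟹ X) ⟶ B)
          = toUnit _ ≫ b := by simp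
      rw [h1, Functor.map_comp]
      have h2 : P.pShrek.map (toUnit (B ⟹ X))
          = toUnit _ ≫ (tShrek P).from (𝟙_ (Type u₁)) := (tShrek P).hom_ext _ _
      rw [h2]
      simp
      rw [← Category.assoc]
      exact congrArg (· ≫ P.pShrek.map b) ((tShrek P).hom_ext _ _)
    · rw [Category.assoc, Category.assoc, CartesianMonoidalCategory.prodComparison_snd, ← Functor.map_comp,
        ← Functor.map_comp]
      have h1 : ((λ_ (B ⟹ X)).inv ≫ (b ▷ (B ⟹ X)) ≫ snd _ _ : (B ⟹ X) ⟶ (B ⟹ X))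
          = 𝟙 _ := by simp
      rw [h1]
      simp
  calc P.pShrek.map (λ_ (B ⟹ X)).inv ≫ P.pShrek.map (b ▷ (B ⟹ X))
          ≫ P.pShrek.map ((ihom.ev B).app X)
      = ((P.pShrek.map (λ_ (B ⟹ X)).inv ≫ P.pShrek.map (b ▷ (B ⟹ X)))
          ≫ prodComparison P.pShrek B (B ⟹ X)) ≫ inv (prodComparison P.pShrek B (B ⟹ X))
          ≫ P.pShrek.map ((ihom.ev B).app X) := by simp [Category.assoc]
    _ = ((λ_ (P.pShrek.obj (B ⟹ X))).inv
          ≫ (((tShrek P).from (𝟙_ (Type u₁)) ≫ P.pShrek.map b) ▷ P.pShrek.obj (B ⟹ X)))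
          ≫ inv (prodComparison P.pShrek B (B ⟹ X))
          ≫ P.pShrek.map ((ihom.ev B).app X) := by rw [hpre]
    _ = _ := by simp [Category.assoc]

lemma tauInv_point (A : Type u₁) (a : A) :
    (TypeCat.ofHom fun _ => P.tauInv A a : 𝟙_ (Type u₁) ⟶ P.pShrek.obj (P.pStar.obj A))
      = (tShrek P).from (𝟙_ (Type u₁)) ≫ P.pShrek.map (ptU P a) := by
  letI := P.starFull
  letI := P.starFaithful
  rw [← cancel_mono (P.adj₁.counit.app A)]
  have h1 : P.pShrek.map (ptU P a) ≫ P.adj₁.counit.app A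
      = (TypeCat.ofHom fun _ => a : P.pShrek.obj (𝟙_ E') ⟶ A) := by
    have hce := P.adj₁.homEquiv_counit (X := 𝟙_ E') (Y := A) (g := ptU P a)
    rw [← hce, ptU, Equiv.symm_apply_apply]
  rw [Category.assoc, h1]
  ext x
  show P.adj₁.counit.app A (P.tauInv A a) = a
  have : P.tauInv A ≫ P.adj₁.counit.app A = 𝟙 A := by
    simp [PreCohesive.tauInv]
  exact types_congr_hom this a

end CatLemmas

end Stmt16Aux

/-- in `Set` (which satisfies the internal axiom of choice) every quasi-exact
coequalizer fork is powerful; consequently, for a pre-cohesive `p : E → Set` with a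
connector, every navigable object (one whose connector fork is quasi-exact) is weakly Kan. -/
theorem stmt16 {E' : Type u₂} [Category.{u₁} E'] [CartesianMonoidalCategory E'] [MonoidalClosed E']
    (P : PreCohesive (Type u₁) E') (I : E') (i₀ i₁ : 𝟙_ E' ⟶ I)
    (hconn : P.Connector I i₀ i₁) :
    (∀ {A B C : Type u₁} (e₀ e₁ : A → B) (q : B → C), QuasiExactSet e₀ e₁ q →
      ∀ Z : Type u₁,
        IsSetCoequalizer (fun h : Z → A => fun z => e₀ (h z))
          (fun h : Z → A => fun z => e₁ (h z)) (fun h : Z → B => fun z => q (h z))) ∧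
    ∀ X : E',
      QuasiExactSet (P.pLow.map (evPt i₀ X)) (P.pLow.map (evPt i₁ X)) (P.theta X) →
        P.WeaklyKan X := by
  constructor
  · intro A B C e₀ e₁ q hq Z
    exact Stmt16Aux.quasiExact_powerful hq Z
  · intro X hqe A
    letI := P.starFull
    letI := P.starFaithful
    classical
    set B := P.pStar.obj A with hB
    set Y := (B ⟹ X : E') with hY
    have fork1 := Stmt16Aux.isCoeqFork_to_set (hconn Y)
    have fork2 := Stmt16Aux.quasiExact_powerful hqe A
    -- the comparison data
    set α : P.pLow.obj (I ⟹ Y) → (A → P.pLow.obj (I ⟹ X)) :=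
      fun t a => P.pLow.map ((ihom I).map (evPt (Stmt16Aux.ptU P a) X)) t with hα'
    have hα : Function.Surjective α := by
      intro f
      obtain ⟨s, hs⟩ := (Stmt16Aux.phi_bijective P A (I ⟹ X)).2 f
      refine ⟨P.pLow.map (Stmt16Aux.swMap I B X) s, ?_⟩
      funext a
      show P.pLow.map ((ihom I).map (evPt (Stmt16Aux.ptU P a) X))
          (P.pLow.map (Stmt16Aux.swMap I B X) s) = f a
      rw [← types_comp_apply (P.pLow.map _) (P.pLow.map _), ← Functor.map_comp,
        Stmt16Aux.swMap_evPt]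
      exact congrFun hs a
    set βE := Equiv.ofBijective _ (Stmt16Aux.phi_bijective P A X) with hβE
    have s₀ : ∀ t, βE (P.pLow.map (evPt i₀ Y) t)
        = fun a => P.pLow.map (evPt i₀ X) (α t a) := by
      intro t; funext a
      show P.pLow.map (evPt (Stmt16Aux.ptU P a) X) (P.pLow.map (evPt i₀ Y) t)
        = P.pLow.map (evPt i₀ X)
            (P.pLow.map ((ihom I).map (evPt (Stmt16Aux.ptU P a) X)) t)
      rw [← types_comp_apply (P.pLow.map _) (P.pLow.map _), ← Functor.map_comp,
        ← types_comp_apply (P.pLow.map _) (P.pLow.map _), ← Functor.map_comp,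
        Stmt16Aux.evPt_natural]
    have s₁ : ∀ t, βE (P.pLow.map (evPt i₁ Y) t)
        = fun a => P.pLow.map (evPt i₁ X) (α t a) := by
      intro t; funext a
      show P.pLow.map (evPt (Stmt16Aux.ptU P a) X) (P.pLow.map (evPt i₁ Y) t)
        = P.pLow.map (evPt i₁ X)
            (P.pLow.map ((ihom I).map (evPt (Stmt16Aux.ptU P a) X)) t)
      rw [← types_comp_apply (P.pLow.map _) (P.pLow.map _), ← Functor.map_comp,
        ← types_comp_apply (P.pLow.map _) (P.pLow.map _), ← Functor.map_comp,
        Stmt16Aux.evPt_natural]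
    -- the comparison map
    set cpt : A → (𝟙_ (Type u₁) ⟶ P.pShrek.obj B) := fun a => TypeCat.ofHom fun _ => P.tauInv A a with hcpt
    set m : (P.pShrek.obj B ⟹ P.pShrek.obj X) → (A → P.pShrek.obj X) :=
      fun g a => evPt (cpt a) (P.pShrek.obj X) g with hm'
    set γ : P.pShrek.obj Y → (A → P.pShrek.obj X) := fun y => m (P.kappa B X y) with hγ'
    have hγ : ∀ s, γ (P.theta Y s) = fun a => P.theta X (Stmt16Aux.Phi P A X s a) := by
      intro s; funext a
      have h1 : P.kappa B X ≫ evPt (cpt a) (P.pShrek.obj X)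
          = P.pShrek.map (evPt (Stmt16Aux.ptU P a) X) := by
        rw [show (cpt a) = (Stmt16Aux.tShrek P).from (𝟙_ (Type u₁))
              ≫ P.pShrek.map (Stmt16Aux.ptU P a) from Stmt16Aux.tauInv_point P A a,
          ← Stmt16Aux.kappa_point]
      calc γ (P.theta Y s) a
          = (P.theta Y ≫ P.kappa B X ≫ evPt (cpt a) (P.pShrek.obj X)) s := rfl
        _ = (P.theta Y ≫ P.pShrek.map (evPt (Stmt16Aux.ptU P a) X)) s := by rw [h1]
        _ = (P.pLow.map (evPt (Stmt16Aux.ptU P a) X) ≫ P.theta X) s := by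
            rw [Stmt16Aux.theta_natural]
        _ = P.theta X (Stmt16Aux.Phi P A X s a) := rfl
    have hγb : Function.Bijective γ :=
      Stmt16Aux.coeq_cmp_bijective fork1 fork2 α hα βE s₀ s₁ γ hγ
    -- `m` is a bijection
    have hIso : IsIso (P.tauInv A) := by
      rw [PreCohesive.tauInv]; infer_instance
    have htau := (isIso_iff_bijective (P.tauInv A)).1 hIso
    set eτ := Equiv.ofBijective _ htau with heτ
    have hmg : ∀ g a, m g a = (TypeCat.homEquiv (X := P.pShrek.obj B) (Y := P.pShrek.obj X) g) (P.tauInv A a) := fun g a => rfl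
    have hm : Function.Bijective m := by
      constructor
      · intro g g' hgg'
        refine TypeCat.Hom.ext (TypeCat.Fun.ext (funext fun bb => ?_))
        obtain ⟨a, rfl⟩ := htau.2 bb
        have hcf := congrFun hgg' a
        rw [hmg g a, hmg g' a] at hcf
        exact hcf
      · intro h
        refine ⟨TypeCat.ofHom fun bb => h (eτ.symm bb), ?_⟩
        funext a
        show h (eτ.symm (eτ a)) = h a
        rw [Equiv.symm_apply_apply]
    have hκ : Function.Bijective (P.kappa B X) := by
      constructor
      · intro y y' hy
        exact hγb.1 (by show m (P.kappa B X y) = m (P.kappa B X y'); rw [hy])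
      · intro g
        obtain ⟨y, hy⟩ := hγb.2 (m g)
        exact ⟨y, hm.1 hy⟩
    exact (isIso_iff_bijective _).2 hκ
end
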